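/- Let T_{n,k} satisfy the staircase-tableau recurrence T_{n,k} = (k+1)T_{n-1,k} + (n+1)T_{n-1,k-1} + (n-k+1)T_{n-1,k-2}, with T_{0,0}=1 and T_{n,k}=0 unless 0 ≤ k ≤ n. Let A_{n,k} satisfy A_{n,k} = (1+k)A_{n-1,k} + (2n-2k+1)A_{n-1,k-1} with A_{0,0}=1 and A_{n,k}=0 unless 0 ≤ k ≤ n. Then for all n ≥ 0, the row-generating functions satisfy T_n(q) = (1+q)^n·A_n(q/(1+q)). -/

import Mathlib

/-!
Comparing coefficients of `q ^ j`, the identity says `T n j = ∑ₖ A n k * C(n - k, j - k)`.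
This binomial transform of `A` satisfies the recurrence of `T`: after substituting the recurrence
of `A`, it reduces termwise to Pascal's rule and `i * C(m, i) = (m - i + 1) * C(m, i - 1)`.
Since the recurrence and `T 0 0 = 1` determine `T`, the two agree.
-/

open Polynomial

section IntChoose

variable {R : Type*}

def intChoose [Semiring R] (m : ℕ) (i : ℤ) : R :=
  if 0 ≤ i then (m.choose i.toNat : R) else 0

section Semiring

variable [Semiring R]

@[simp]
lemma intChoose_natCast (m t : ℕ) : (intChoose m t : R) = m.choose t := by
  simp [intChoose]

@[simp]
lemma intChoose_zero_right (m : ℕ) : (intChoose m 0 : R) = 1 := by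
  simp [intChoose]

lemma intChoose_of_neg {m : ℕ} {i : ℤ} (hi : i < 0) : (intChoose m i : R) = 0 := by
  simp [intChoose, hi.not_ge]

lemma intChoose_natCast_sub_natCast (m t k : ℕ) :
    (intChoose m (t - k) : R) = if k ≤ t then (m.choose (t - k) : R) else 0 := by
  split_ifs with h
  · rw [← Nat.cast_sub h, intChoose_natCast]
  · exact intChoose_of_neg (by omega)

lemma intChoose_of_lt {m : ℕ} {i : ℤ} (hi : (m : ℤ) < i) : (intChoose m i : R) = 0 := by
  lift i to ℕ using by omega
  rw [intChoose_natCast, Nat.choose_eq_zero_of_lt (by omega), Nat.cast_zero]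

lemma intChoose_zero_left_of_ne {i : ℤ} (hi : i ≠ 0) : (intChoose 0 i : R) = 0 := by
  rcases hi.lt_or_gt with hi | hi
  · exact intChoose_of_neg hi
  · exact intChoose_of_lt hi

lemma intChoose_succ (m : ℕ) (i : ℤ) :
    (intChoose (m + 1) i : R) = intChoose m i + intChoose m (i - 1) := by
  rcases lt_or_ge i 0 with hi | hi
  · simp [intChoose_of_neg, hi, show i - 1 < 0 by omega]
  lift i to ℕ using hi
  cases i with
  | zero => simp [intChoose]
  | succ t =>
    rw [show ((t + 1 : ℕ) : ℤ) - 1 = t by omega, intChoose_natCast, intChoose_natCast,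
      intChoose_natCast, Nat.choose_succ_succ', Nat.cast_add, add_comm]

end Semiring

lemma intCast_mul_intChoose [CommRing R] (m : ℕ) (i : ℤ) :
    (i : R) * intChoose m i = ((m : R) - i + 1) * intChoose m (i - 1) := by
  obtain hi | ⟨t, rfl⟩ : i ≤ 0 ∨ ∃ t : ℕ, i = t + 1 := by
    rcases le_or_gt i 0 with hi | hi
    · exact .inl hi
    · exact .inr ⟨(i - 1).toNat, by omega⟩
  · rw [intChoose_of_neg (by omega : i - 1 < 0), mul_zero]
    rcases hi.lt_or_eq with hi | rfl
    · rw [intChoose_of_neg hi, mul_zero]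
    · rw [Int.cast_zero, zero_mul]
  · rw [add_sub_cancel_right, ← Nat.cast_succ, intChoose_natCast, intChoose_natCast]
    rcases le_or_gt t m with ht | ht
    · have h := congrArg (Nat.cast : ℕ → R) (Nat.choose_succ_right_eq m t)
      push_cast [ht] at h
      push_cast
      linear_combination h
    · rw [Nat.choose_eq_zero_of_lt ht, Nat.choose_eq_zero_of_lt (by omega)]
      simp

/-- The recurrence of `T` for a single term of the binomial transform, with `m = n - k`,
`i = j - k` and `x = k`. -/
lemma intChoose_staircase_identity [CommRing R] (m : ℕ) (i : ℤ) (x : R) :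
    (1 + x) * intChoose (m + 1) i + (2 * m + 1) * intChoose m (i - 1) =
      (i + x + 1) * intChoose m i + (m + x + 2) * intChoose m (i - 1) +
        (m - i + 2) * intChoose m (i - 2) := by
  have h₁ := intCast_mul_intChoose (R := R) m i
  have h₂ := intCast_mul_intChoose (R := R) m (i - 1)
  rw [sub_sub, one_add_one_eq_two] at h₂
  push_cast at h₂
  rw [intChoose_succ]
  linear_combination h₂ - h₁

end IntChoose

section BinomialTransform

variable {R : Type*}

def binomialTransform [Semiring R] (a : ℤ → R) (n : ℕ) (j : ℤ) : R :=
  ∑ k ∈ Finset.range (n + 1), a k * intChoose (n - k) (j - k)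

variable [CommRing R]

lemma binomialTransform_zero (a : ℤ → R) (j : ℤ) :
    binomialTransform a 0 j = a 0 * intChoose 0 j := by
  simp [binomialTransform]

variable {A : ℕ → ℤ → R}

lemma binomialTransform_succ_eq_sum
    (hAb : ∀ (n : ℕ) (k : ℤ), (k < 0 ∨ (n : ℤ) < k) → A n k = 0)
    (hArec : ∀ (n : ℕ) (k : ℤ),
      A (n + 1) k = (1 + (k : R)) * A n k + (2 * ((n : R) + 1) - 2 * (k : R) + 1) * A n (k - 1))
    (n : ℕ) (j : ℤ) :
    binomialTransform (A (n + 1)) (n + 1) j =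
      ∑ k ∈ Finset.range (n + 1), A n k * ((1 + (k : R)) * intChoose (n - k + 1) (j - k) +
        (2 * ((n - k : ℕ) : R) + 1) * intChoose (n - k) (j - k - 1)) := by
  have htop : A n ((n + 1 : ℕ) : ℤ) = 0 := hAb n _ (.inr (by omega))
  have hbot : A n ((0 : ℕ) - 1) = 0 := hAb n _ (.inl (by omega))
  simp only [binomialTransform, hArec n, add_mul _ _ (intChoose _ _), Finset.sum_add_distrib]
  rw [Finset.sum_range_succ, Finset.sum_range_succ' (fun k : ℕ => _ * A n (k - 1) * _), htop, hbot]
  simp only [mul_zero, zero_mul, add_zero]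
  rw [← Finset.sum_add_distrib]
  refine Finset.sum_congr rfl fun k hk => ?_
  have hk : k ≤ n := Nat.lt_succ_iff.mp (Finset.mem_range.mp hk)
  rw [show n + 1 - (k + 1) = n - k by omega, show j - ((k + 1 : ℕ) : ℤ) = j - k - 1 by omega,
    show ((k + 1 : ℕ) : ℤ) - 1 = k by omega, Nat.sub_add_comm hk]
  push_cast [hk]
  ring

lemma binomialTransform_succ
    (hAb : ∀ (n : ℕ) (k : ℤ), (k < 0 ∨ (n : ℤ) < k) → A n k = 0)
    (hArec : ∀ (n : ℕ) (k : ℤ),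
      A (n + 1) k = (1 + (k : R)) * A n k + (2 * ((n : R) + 1) - 2 * (k : R) + 1) * A n (k - 1))
    (n : ℕ) (j : ℤ) :
    binomialTransform (A (n + 1)) (n + 1) j =
      ((j : R) + 1) * binomialTransform (A n) n j +
        ((n : R) + 1 + 1) * binomialTransform (A n) n (j - 1) +
          ((n : R) + 1 - (j : R) + 1) * binomialTransform (A n) n (j - 2) := by
  rw [binomialTransform_succ_eq_sum hAb hArec]
  simp only [binomialTransform, Finset.mul_sum, ← Finset.sum_add_distrib]
  refine Finset.sum_congr rfl fun k hk => ?_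
  have hk : k ≤ n := Nat.lt_succ_iff.mp (Finset.mem_range.mp hk)
  have h := intChoose_staircase_identity (n - k) (j - k) (k : R)
  rw [show j - 1 - k = j - k - 1 by omega, show j - 2 - k = j - k - 2 by omega]
  push_cast [hk] at h ⊢
  linear_combination A n k * h

end BinomialTransform

section Coefficients

variable {R : Type*} [CommSemiring R]

lemma coeff_sum_range_C_mul_X_pow {a : ℤ → R} {n : ℕ} (ha : ∀ k : ℤ, (n : ℤ) < k → a k = 0)
    (m : ℕ) : (∑ k ∈ Finset.range (n + 1), C (a k) * X ^ k).coeff m = a m := by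
  simp only [finsetSum_coeff, coeff_C_mul_X_pow, Finset.sum_ite_eq, Finset.mem_range]
  split_ifs with hm
  · rfl
  · exact (ha m (by omega)).symm

lemma coeff_sum_range_C_mul_X_pow_mul_one_add_X_pow (a : ℤ → R) (n m : ℕ) :
    (∑ k ∈ Finset.range (n + 1), C (a k) * X ^ k * (1 + X) ^ (n - k)).coeff m =
      binomialTransform a n m := by
  simp only [finsetSum_coeff, binomialTransform]
  refine Finset.sum_congr rfl fun k _ => ?_
  rw [mul_assoc, mul_comm (X ^ k), coeff_C_mul, coeff_mul_X_pow', coeff_one_add_X_pow,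
    intChoose_natCast_sub_natCast]

end Coefficients

theorem staircase_tableaux_transformation
    (T A : ℕ → ℤ → ℝ)
    (hT0 : T 0 0 = 1)
    (hTb : ∀ (n : ℕ) (k : ℤ), (k < 0 ∨ (n : ℤ) < k) → T n k = 0)
    (hTrec : ∀ (n : ℕ) (k : ℤ),
      T (n + 1) k =
        ((k : ℝ) + 1) * T n k + ((n : ℝ) + 1 + 1) * T n (k - 1) +
          ((n : ℝ) + 1 - (k : ℝ) + 1) * T n (k - 2))
    (hA0 : A 0 0 = 1)
    (hAb : ∀ (n : ℕ) (k : ℤ), (k < 0 ∨ (n : ℤ) < k) → A n k = 0)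
    (hArec : ∀ (n : ℕ) (k : ℤ),
      A (n + 1) k =
        (1 + (k : ℝ)) * A n k + (2 * ((n : ℝ) + 1) - 2 * (k : ℝ) + 1) * A n (k - 1)) :
    ∀ n : ℕ,
      (∑ k ∈ Finset.range (n + 1), C (T n (k : ℤ)) * X ^ k) =
        ∑ k ∈ Finset.range (n + 1), C (A n (k : ℤ)) * X ^ k * (1 + X) ^ (n - k) := by
  have hTA : ∀ n j, T n j = binomialTransform (A n) n j := by
    intro n
    induction n with
    | zero =>
      intro j
      rw [binomialTransform_zero]
      obtain rfl | hj := eq_or_ne j 0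
      · rw [hT0, hA0, intChoose_zero_right, mul_one]
      · rw [hTb 0 j (by omega), intChoose_zero_left_of_ne hj, mul_zero]
    | succ n ih =>
      intro j
      rw [hTrec, ih, ih, ih, binomialTransform_succ hAb hArec]
  intro n
  ext m
  rw [coeff_sum_range_C_mul_X_pow (fun k hk => hTb n k (.inr hk)),
    coeff_sum_range_C_mul_X_pow_mul_one_add_X_pow, hTA]
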